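/- arXiv:1412.8105 — 2 statements merged into one kernel-verified Lean document; each statement's English description precedes it below -/
import Mathlib

section
/- There exists a positive integer t, independent of X, such that for every n×n positive semidefinite real matrix X the iterate g^t(X) (the t-fold composition of g applied to X) is positive definite. -/
open Filter Matrix

noncomputable section

/-- The operator `g(X) = A X Aᵀ + Q − A X Cᵀ (C X Cᵀ + R)⁻¹ C X Aᵀ`. -/
def gOp {n m : ℕ} (A Q : Matrix (Fin n) (Fin n) ℝ) (C : Matrix (Fin m) (Fin n) ℝ)
    (R : Matrix (Fin m) (Fin m) ℝ) (X : Matrix (Fin n) (Fin n) ℝ) :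
    Matrix (Fin n) (Fin n) ℝ :=
  A * X * Aᵀ + Q - A * X * Cᵀ * (C * X * Cᵀ + R)⁻¹ * (C * X * Aᵀ)

/-- The stacked observability matrix `[C; CA; …; CA^(k−1)]`. -/
def obsMat {n m : ℕ} (C : Matrix (Fin m) (Fin n) ℝ) (A : Matrix (Fin n) (Fin n) ℝ) (k : ℕ) :
    Matrix (Fin k × Fin m) (Fin n) ℝ :=
  fun p j => (C * A ^ (p.1 : ℕ)) p.2 j

/-- The controllability matrix `[S, AS, …, A^(n−1) S]`. -/
def ctrbMat {n : ℕ} (A : Matrix (Fin n) (Fin n) ℝ) (S : Matrix (Fin n) (Fin n) ℝ) :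
    Matrix (Fin n) (Fin n × Fin n) ℝ :=
  fun i p => (A ^ (p.1 : ℕ) * S) i p.2

/-- The square root of a positive semidefinite matrix, as `Matrix.PosSemidef.sqrt` was defined
in the older Mathlib (removed since). -/
def Matrix.PosSemidef.sqrt {n : Type*} [Fintype n] [DecidableEq n]
    {A : Matrix n n ℝ} (hA : A.PosSemidef) : Matrix n n ℝ :=
  hA.1.eigenvectorUnitary.1 * diagonal ((↑) ∘ (√·) ∘ hA.1.eigenvalues) *
    (star hA.1.eigenvectorUnitary : Matrix n n ℝ)

/-!
With `K` the Kalman gain, `g` has the Joseph form `g(X) = (A - KC) X (A - KC)ᵀ + K R Kᵀ + Q`, a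
sum of positive semidefinite terms. So if `vᵀ g(X) v = 0`, then `vᵀ Q v = 0` and, as `R` is positive
definite, `Kᵀ v = 0`; hence `vᵀ (A - KC) = vᵀ A` and `Aᵀ v` is a null vector of `X`. Iterating, a null
vector `v` of `gᵗ(X)` satisfies `vᵀ Aʲ Q^{1/2} = 0` for all `j < t`, and once `t ≥ n` the
controllability of `(A, Q^{1/2})` forces `v = 0`.
-/

namespace Matrix

variable {ι : Type*} [Fintype ι]

theorem PosSemidef.posDef_of_dotProduct_mulVec_eq_zero {R : Type*} [CommRing R] [PartialOrder R]
    [StarRing R] {M : Matrix ι ι R} (hM : M.PosSemidef)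
    (h : ∀ v : ι → R, star v ⬝ᵥ M *ᵥ v = 0 → v = 0) : M.PosDef :=
  .of_dotProduct_mulVec_pos hM.1 fun v hv =>
    (hM.dotProduct_mulVec_nonneg v).lt_of_ne fun h0 => hv (h v h0.symm)

theorem dotProduct_mulVec_mul_mul_transpose {κ R : Type*} [Fintype κ] [CommSemiring R]
    (B : Matrix ι κ R) (X : Matrix κ κ R) (v : ι → R) :
    v ⬝ᵥ (B * X * Bᵀ) *ᵥ v = (v ᵥ* B) ⬝ᵥ X *ᵥ (v ᵥ* B) := by
  rw [← mulVec_mulVec, ← mulVec_mulVec, dotProduct_mulVec, mulVec_transpose]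

theorem eq_zero_of_vecMul_eq_zero_of_rank_eq {κ K : Type*} [Fintype κ] [Field K] {M : Matrix ι κ K}
    (hM : M.rank = Fintype.card ι) {v : ι → K} (hv : v ᵥ* M = 0) : v = 0 := by
  have hrows : LinearIndependent K M.row := linearIndependent_iff_card_eq_finrank_span.mpr <| by
    rw [Set.finrank, ← rank_eq_finrank_span_row, hM]
  exact vecMul_injective_iff.mpr hrows (hv.trans (zero_vecMul M).symm)

theorem PosSemidef.dotProduct_mulVec_nonneg' {M : Matrix ι ι ℝ} (hM : M.PosSemidef) (v : ι → ℝ) :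
    0 ≤ v ⬝ᵥ M *ᵥ v := by
  simpa using hM.dotProduct_mulVec_nonneg v

theorem PosSemidef.mul_mul_transpose_same {κ : Type*} [Fintype κ] {X : Matrix κ κ ℝ}
    (hX : X.PosSemidef) (B : Matrix ι κ ℝ) : (B * X * Bᵀ).PosSemidef := by
  simpa [conjTranspose_eq_transpose_of_trivial] using hX.mul_mul_conjTranspose_same B

variable [DecidableEq ι] {M : Matrix ι ι ℝ}

theorem PosSemidef.isHermitian_sqrt (hM : M.PosSemidef) : hM.sqrt.IsHermitian := by
  simp only [PosSemidef.sqrt, IsHermitian, conjTranspose_mul, diagonal_conjTranspose,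
    Matrix.mul_assoc]
  simp [star_eq_conjTranspose]

theorem PosSemidef.sqrt_mul_self (hM : M.PosSemidef) : hM.sqrt * hM.sqrt = M := by
  set U : Matrix ι ι ℝ := (hM.1.eigenvectorUnitary : Matrix ι ι ℝ)
  have hU : star U * U = 1 := Unitary.coe_star_mul_self _
  conv_rhs => rw [hM.1.spectral_theorem, Unitary.conjStarAlgAut_apply]
  simp only [PosSemidef.sqrt, Matrix.mul_assoc]
  rw [← Matrix.mul_assoc (star U), hU, Matrix.one_mul, ← Matrix.mul_assoc (diagonal _),
    diagonal_mul_diagonal]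
  congr 3
  funext i
  simp [Real.mul_self_sqrt (hM.eigenvalues_nonneg i)]

theorem PosSemidef.vecMul_sqrt_eq_zero (hM : M.PosSemidef) {v : ι → ℝ}
    (hv : v ⬝ᵥ M *ᵥ v = 0) : v ᵥ* hM.sqrt = 0 := by
  have hS : hM.sqrtᵀ = hM.sqrt := by
    simpa [conjTranspose_eq_transpose_of_trivial] using hM.isHermitian_sqrt.eq
  rw [← hM.sqrt_mul_self, ← mulVec_mulVec, dotProduct_mulVec, ← hS, ← mulVec_transpose,
    transpose_transpose, hS] at hv
  rw [← mulVec_transpose, hS]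
  exact dotProduct_self_eq_zero.mp hv

end Matrix

open Matrix

theorem eq_zero_of_forall_vecMul_pow_mul_eq_zero {n : ℕ} {A S : Matrix (Fin n) (Fin n) ℝ}
    (hctrb : (ctrbMat A S).rank = n) {v : Fin n → ℝ} (hv : ∀ j < n, v ᵥ* (A ^ j * S) = 0) :
    v = 0 :=
  eq_zero_of_vecMul_eq_zero_of_rank_eq (by rw [hctrb, Fintype.card_fin]) <| by
    ext ⟨j, i⟩
    simpa [vecMul, ctrbMat] using congrFun (hv j j.2) i

section Riccati

variable {n m : ℕ} (A Q : Matrix (Fin n) (Fin n) ℝ) (C : Matrix (Fin m) (Fin n) ℝ)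
  (R : Matrix (Fin m) (Fin m) ℝ)

def kalmanGain (X : Matrix (Fin n) (Fin n) ℝ) : Matrix (Fin n) (Fin m) ℝ :=
  A * X * Cᵀ * (C * X * Cᵀ + R)⁻¹

theorem gOp_eq_josephForm {X : Matrix (Fin n) (Fin n) ℝ} (hS : IsUnit (C * X * Cᵀ + R).det) :
    gOp A Q C R X = (A - kalmanGain A C R X * C) * X * (A - kalmanGain A C R X * C)ᵀ
      + kalmanGain A C R X * R * (kalmanGain A C R X)ᵀ + Q := by
  set K := kalmanGain A C R X
  have hKC : K * (C * X * Cᵀ) = A * X * Cᵀ - K * R := by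
    rw [eq_sub_iff_add_eq, ← Matrix.mul_add]
    exact nonsing_inv_mul_cancel_right _ _ hS
  have hKCK : K * (C * X * Cᵀ) * Kᵀ = A * X * Cᵀ * Kᵀ - K * R * Kᵀ := by
    rw [hKC, Matrix.sub_mul]
  calc gOp A Q C R X = A * X * Aᵀ + Q - K * (C * X * Aᵀ) := by
        simp only [gOp, K, kalmanGain]
    _ = _ := by
      simp only [transpose_sub, transpose_mul, Matrix.sub_mul, Matrix.mul_sub, Matrix.mul_assoc]
        at hKCK ⊢
      rw [hKCK]
      abel

variable {A Q C R}

theorem posDef_mul_mul_transpose_add (hR : R.PosDef) {X : Matrix (Fin n) (Fin n) ℝ}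
    (hX : X.PosSemidef) : (C * X * Cᵀ + R).PosDef := by
  simpa [conjTranspose_eq_transpose_of_trivial] using
    PosDef.posSemidef_add (hX.mul_mul_conjTranspose_same C) hR

theorem gOp_posSemidef (hQ : Q.PosSemidef) (hR : R.PosDef) {X : Matrix (Fin n) (Fin n) ℝ}
    (hX : X.PosSemidef) : (gOp A Q C R X).PosSemidef := by
  rw [gOp_eq_josephForm A Q C R (posDef_mul_mul_transpose_add hR hX).det_pos.ne'.isUnit]
  exact ((hX.mul_mul_transpose_same _).add (hR.posSemidef.mul_mul_transpose_same _)).add hQ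

theorem dotProduct_mulVec_gOp_eq_zero (hQ : Q.PosSemidef) (hR : R.PosDef)
    {X : Matrix (Fin n) (Fin n) ℝ} (hX : X.PosSemidef) {v : Fin n → ℝ}
    (hv : v ⬝ᵥ gOp A Q C R X *ᵥ v = 0) :
    v ⬝ᵥ Q *ᵥ v = 0 ∧ (v ᵥ* A) ⬝ᵥ X *ᵥ (v ᵥ* A) = 0 := by
  set K := kalmanGain A C R X
  rw [gOp_eq_josephForm A Q C R (posDef_mul_mul_transpose_add hR hX).det_pos.ne'.isUnit,
    add_mulVec, add_mulVec, dotProduct_add, dotProduct_add, dotProduct_mulVec_mul_mul_transpose,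
    dotProduct_mulVec_mul_mul_transpose] at hv
  have hX' := hX.dotProduct_mulVec_nonneg' (v ᵥ* (A - K * C))
  have hR' := hR.posSemidef.dotProduct_mulVec_nonneg' (v ᵥ* K)
  have hQ' := hQ.dotProduct_mulVec_nonneg' v
  have hK : v ᵥ* K = 0 := by
    by_contra hK
    have := hR.dotProduct_mulVec_pos hK
    simp only [star_trivial] at this
    linarith
  have hAK : v ᵥ* (A - K * C) = v ᵥ* A := by
    rw [vecMul_sub, ← vecMul_vecMul, hK, zero_vecMul, sub_zero]
  exact ⟨by linarith, by rw [← hAK]; linarith⟩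

theorem gOp_iterate_posSemidef (hQ : Q.PosSemidef) (hR : R.PosDef) (k : ℕ)
    {X : Matrix (Fin n) (Fin n) ℝ} (hX : X.PosSemidef) : ((gOp A Q C R)^[k] X).PosSemidef := by
  induction k with
  | zero => exact hX
  | succ k ih => rw [Function.iterate_succ_apply']; exact gOp_posSemidef hQ hR ih

theorem dotProduct_mulVec_gOp_iterate_eq_zero (hQ : Q.PosSemidef) (hR : R.PosDef) {k : ℕ}
    {X : Matrix (Fin n) (Fin n) ℝ} (hX : X.PosSemidef) {v : Fin n → ℝ}
    (hv : v ⬝ᵥ (gOp A Q C R)^[k] X *ᵥ v = 0) :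
    ∀ j < k, (v ᵥ* A ^ j) ⬝ᵥ Q *ᵥ (v ᵥ* A ^ j) = 0 := by
  induction k generalizing v with
  | zero => exact fun j hj => absurd hj j.not_lt_zero
  | succ k ih =>
    rw [Function.iterate_succ_apply'] at hv
    obtain ⟨hQv, hXv⟩ := dotProduct_mulVec_gOp_eq_zero hQ hR (gOp_iterate_posSemidef hQ hR k hX) hv
    rintro (_ | j) hj
    · simpa using hQv
    · rw [pow_succ', ← vecMul_vecMul]
      exact ih hXv j (by omega)

end Riccati

theorem gIter_posDef_general
    {n m : ℕ}
    (A : Matrix (Fin n) (Fin n) ℝ)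
    (C : Matrix (Fin m) (Fin n) ℝ)
    (Q : Matrix (Fin n) (Fin n) ℝ) (hQ : Q.PosSemidef)
    (hCtrb : (ctrbMat A hQ.sqrt).rank = n)
    (R : Matrix (Fin m) (Fin m) ℝ) (hR : R.PosDef) :
    ∃ t : ℕ, 0 < t ∧ ∀ X : Matrix (Fin n) (Fin n) ℝ, X.PosSemidef →
      ((gOp A Q C R)^[t] X).PosDef := by
  refine ⟨n + 1, n.succ_pos, fun X hX => ?_⟩
  refine (gOp_iterate_posSemidef hQ hR (n + 1) hX).posDef_of_dotProduct_mulVec_eq_zero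
    fun v hv => eq_zero_of_forall_vecMul_pow_mul_eq_zero hCtrb fun j hj => ?_
  rw [← vecMul_vecMul]
  exact hQ.vecMul_sqrt_eq_zero <|
    dotProduct_mulVec_gOp_iterate_eq_zero hQ hR hX (by rwa [star_trivial] at hv) j (by omega)

/-- There is a positive integer `t`, independent of `X`, such that `g^t(X)` is positive
definite for every positive semidefinite `X`. -/
theorem gIter_posDef
    {n m : ℕ} (hn : 0 < n) (hm : 0 < m)
    (A : Matrix (Fin n) (Fin n) ℝ) (hA : IsUnit A.det)
    (C : Matrix (Fin m) (Fin n) ℝ) (hObs : (obsMat C A n).rank = n)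
    (Q : Matrix (Fin n) (Fin n) ℝ) (hQ : Q.PosSemidef)
    (hCtrb : (ctrbMat A hQ.sqrt).rank = n)
    (R : Matrix (Fin m) (Fin m) ℝ) (hR : R.PosDef) :
    ∃ t : ℕ, 0 < t ∧ ∀ X : Matrix (Fin n) (Fin n) ℝ, X.PosSemidef →
      ((gOp A Q C R)^[t] X).PosDef :=
  gIter_posDef_general A C Q hQ hCtrb R hR
end
end

section
/- There exists a constant a > 0 such that Tr(h^k(X)) ≥ a·|λ_1(A)|^{2k} holds for every positive integer k and every n×n positive semidefinite real matrix X, where |λ_1(A)| is the largest magnitude of an eigenvalue of A (the spectral radius of A) and h^k denotes the k-fold composition of h. -/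
open Filter Matrix

noncomputable section

/-- The operator `h(X) = A X Aᵀ + Q`. -/
def hOp {n : ℕ} (A Q : Matrix (Fin n) (Fin n) ℝ) (X : Matrix (Fin n) (Fin n) ℝ) :
    Matrix (Fin n) (Fin n) ℝ :=
  A * X * Aᵀ + Q

/-- The square root `Matrix.PosSemidef.sqrt` of the older Mathlib, removed since. -/
def psdSqrt {n : ℕ} {Q : Matrix (Fin n) (Fin n) ℝ} (hA : Q.PosSemidef) : Matrix (Fin n) (Fin n) ℝ :=
  hA.1.eigenvectorUnitary.1 * diagonal ((↑) ∘ (√·) ∘ hA.1.eigenvalues) *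
  (star hA.1.eigenvectorUnitary : Matrix (Fin n) (Fin n) ℝ)

/-- The largest magnitude of a (complex) eigenvalue, i.e. the spectral radius `|λ₁|`. -/
def specRad {n : ℕ} (M : Matrix (Fin n) (Fin n) ℂ) : ℝ :=
  sSup {x : ℝ | ∃ μ ∈ spectrum ℂ M, x = ‖μ‖}

/-! Unrolling the recursion gives `h^k(X) = Aᵏ X (Aᵏ)ᵀ + G_k` with the controllability Gramian
`G_k = ∑_{j<k} Aʲ Q (Aʲ)ᵀ`, so `Tr h^k(X) ≥ Tr G_k`. Controllability makes `G_n = C Cᵀ` positive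
definite, say `G_n ≥ c I`; since `G_{m+n} ≥ Aᵐ G_n (Aᵐ)ᵀ`, this gives
`Tr G_{m+n} ≥ c ‖Aᵐ‖_F² ≥ c |λ₁|^{2m}`, as `λ₁ᵐ` is an eigenvalue of `Aᵐ` and eigenvalues are
bounded by the Frobenius norm. For the finitely many `k < n`, `Tr G_k ≥ Tr Q > 0` suffices. -/

open scoped MatrixOrder

section Gramian

variable {ι R : Type*} [Fintype ι] [DecidableEq ι] [CommSemiring R]

def ctrbGramian (A Q : Matrix ι ι R) (k : ℕ) : Matrix ι ι R :=
  ∑ j ∈ Finset.range k, A ^ j * Q * (A ^ j)ᵀ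

theorem ctrbGramian_add (A Q : Matrix ι ι R) (k l : ℕ) :
    ctrbGramian A Q (k + l) = ctrbGramian A Q k + A ^ k * ctrbGramian A Q l * (A ^ k)ᵀ := by
  simp only [ctrbGramian, Finset.sum_range_add, Finset.mul_sum, Finset.sum_mul, pow_add,
    transpose_mul, Matrix.mul_assoc]

theorem posSemidef_ctrbGramian {Q : Matrix ι ι ℝ} (hQ : Q.PosSemidef) (A : Matrix ι ι ℝ)
    (k : ℕ) : (ctrbGramian A Q k).PosSemidef :=
  posSemidef_sum _ fun j _ => by
    simpa only [conjTranspose_eq_transpose_of_trivial] using hQ.mul_mul_conjTranspose_same (A ^ j)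

theorem trace_ctrbGramian_le_add {Q : Matrix ι ι ℝ} (hQ : Q.PosSemidef) (A : Matrix ι ι ℝ)
    (k l : ℕ) : (ctrbGramian A Q k).trace ≤ (ctrbGramian A Q (k + l)).trace := by
  rw [ctrbGramian_add, trace_add, le_add_iff_nonneg_right]
  simpa only [conjTranspose_eq_transpose_of_trivial] using
    ((posSemidef_ctrbGramian hQ A l).mul_mul_conjTranspose_same (A ^ k)).trace_nonneg

theorem trace_conj_ctrbGramian_le {Q : Matrix ι ι ℝ} (hQ : Q.PosSemidef) (A : Matrix ι ι ℝ)
    (k l : ℕ) :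
    (A ^ k * ctrbGramian A Q l * (A ^ k)ᵀ).trace ≤ (ctrbGramian A Q (k + l)).trace := by
  rw [ctrbGramian_add, trace_add, le_add_iff_nonneg_left]
  exact (posSemidef_ctrbGramian hQ A k).trace_nonneg

theorem ctrbMat_mul_transpose {n : ℕ} (A S : Matrix (Fin n) (Fin n) ℝ) :
    ctrbMat A S * (ctrbMat A S)ᵀ = ctrbGramian A (S * Sᵀ) n := by
  ext i i'
  rw [ctrbGramian, Matrix.sum_apply,
    ← Fin.sum_univ_eq_sum_range (fun j => (A ^ j * (S * Sᵀ) * (A ^ j)ᵀ) i i'), mul_apply,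
    Fintype.sum_prod_type]
  refine Finset.sum_congr rfl fun j _ => ?_
  rw [show A ^ (j : ℕ) * (S * Sᵀ) * (A ^ (j : ℕ))ᵀ = A ^ (j : ℕ) * S * (A ^ (j : ℕ) * S)ᵀ by
    simp only [transpose_mul, Matrix.mul_assoc], mul_apply]
  rfl

end Gramian

theorem hOp_iterate {n : ℕ} (A Q X : Matrix (Fin n) (Fin n) ℝ) (k : ℕ) :
    (hOp A Q)^[k] X = A ^ k * X * (A ^ k)ᵀ + ctrbGramian A Q k := by
  induction k with
  | zero => simp [ctrbGramian]
  | succ k ih =>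
    rw [Function.iterate_succ_apply', ih, hOp, pow_succ', transpose_mul, add_comm k 1,
      ctrbGramian_add]
    simp only [ctrbGramian, Finset.sum_range_one, pow_zero, pow_one, transpose_one,
      Matrix.one_mul, Matrix.mul_one, Matrix.mul_add, Matrix.add_mul, Matrix.mul_assoc]
    abel

theorem trace_ctrbGramian_le_trace_hOp_iterate {n : ℕ} (A : Matrix (Fin n) (Fin n) ℝ)
    {Q X : Matrix (Fin n) (Fin n) ℝ} (hX : X.PosSemidef) (k : ℕ) :
    (ctrbGramian A Q k).trace ≤ ((hOp A Q)^[k] X).trace := by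
  rw [hOp_iterate, trace_add, le_add_iff_nonneg_left]
  simpa only [conjTranspose_eq_transpose_of_trivial] using
    (hX.mul_mul_conjTranspose_same (A ^ k)).trace_nonneg

theorem posDef_mul_transpose_self_of_rank_eq {ι κ : Type*} [Fintype ι] [Fintype κ]
    (C : Matrix ι κ ℝ) (hC : C.rank = Fintype.card ι) : (C * Cᵀ).PosDef := by
  have hrows : LinearIndependent ℝ C.row := by
    rw [linearIndependent_iff_card_eq_finrank_span, Set.finrank, ← rank_eq_finrank_span_row, hC]
  simpa only [conjTranspose_eq_transpose_of_trivial] using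
    PosDef.mul_conjTranspose_self C (vecMul_injective_iff.2 hrows)

theorem Matrix.PosDef.exists_pos_mul_trace_le {ι κ : Type*} [Fintype ι] [DecidableEq ι]
    [Nonempty ι] [Fintype κ] {W : Matrix ι ι ℝ} (hW : W.PosDef) :
    ∃ c > 0, ∀ M : Matrix κ ι ℝ, c * (M * Mᵀ).trace ≤ (M * W * Mᵀ).trace := by
  obtain ⟨c, hc, hcW⟩ := (CFC.exists_pos_algebraMap_le_iff hW.isHermitian.isSelfAdjoint).2
    fun x hx => hW.isStrictlyPositive.spectrum_pos hx
  refine ⟨c, hc, fun M => ?_⟩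
  have := ((le_iff.1 hcW).mul_mul_conjTranspose_same M).trace_nonneg
  rw [Algebra.algebraMap_eq_smul_one, conjTranspose_eq_transpose_of_trivial, Matrix.mul_sub,
    Matrix.sub_mul, trace_sub, Matrix.mul_smul, Matrix.smul_mul, Matrix.mul_one, trace_smul,
    smul_eq_mul] at this
  linarith

theorem psdSqrt_mul_transpose_self {n : ℕ} {Q : Matrix (Fin n) (Fin n) ℝ} (hQ : Q.PosSemidef) :
    psdSqrt hQ * (psdSqrt hQ)ᵀ = Q := by
  have hsqrt : psdSqrt hQ = CFC.sqrt Q := by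
    rw [CFC.sqrt_eq_real_sqrt Q hQ.nonneg, cfcₙ_eq_cfc, hQ.1.cfc_eq, IsHermitian.cfc, psdSqrt,
      Unitary.conjStarAlgAut_apply]
    rfl
  rw [hsqrt, ← conjTranspose_eq_transpose_of_trivial, ← star_eq_conjTranspose,
    (CFC.sqrt_nonneg Q).isSelfAdjoint.star_eq, CFC.sqrt_mul_sqrt_self Q hQ.nonneg]

theorem posDef_ctrbGramian {n : ℕ} (A : Matrix (Fin n) (Fin n) ℝ) {Q : Matrix (Fin n) (Fin n) ℝ}
    (hQ : Q.PosSemidef) (hCtrb : (ctrbMat A (psdSqrt hQ)).rank = n) :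
    (ctrbGramian A Q n).PosDef := by
  rw [← psdSqrt_mul_transpose_self hQ, ← ctrbMat_mul_transpose]
  exact posDef_mul_transpose_self_of_rank_eq _ (by rw [hCtrb, Fintype.card_fin])

section Frobenius

attribute [local instance] Matrix.frobeniusNormedAddCommGroup Matrix.frobeniusNormSMulClass

theorem norm_le_frobenius_norm_of_mem_spectrum {𝕜 ι : Type*} [RCLike 𝕜] [Fintype ι]
    [DecidableEq ι] {B : Matrix ι ι 𝕜} {μ : 𝕜} (hμ : μ ∈ spectrum 𝕜 B) : ‖μ‖ ≤ ‖B‖ := by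
  obtain ⟨v, hv⟩ := (Module.End.hasEigenvalue_iff_mem_spectrum (f := toLin' B).2
    (by rwa [spectrum_toLin'])).exists_hasEigenvector
  have hBv : B * replicateCol (Fin 1) v = μ • replicateCol (Fin 1) v := by
    rw [← Matrix.replicateCol_mulVec, ← toLin'_apply, hv.apply_eq_smul, replicateCol_smul]
  have hV : 0 < ‖replicateCol (Fin 1) v‖ := norm_pos_iff.2 (by simpa using hv.2)
  refine le_of_mul_le_mul_right ?_ hV
  calc ‖μ‖ * ‖replicateCol (Fin 1) v‖ = ‖B * replicateCol (Fin 1) v‖ := by rw [hBv, norm_smul]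
    _ ≤ ‖B‖ * ‖replicateCol (Fin 1) v‖ := frobenius_norm_mul _ _

theorem trace_mul_transpose_self_eq_frobenius_norm_sq {ι κ : Type*} [Fintype ι] [Fintype κ]
    (M : Matrix ι κ ℝ) : (M * Mᵀ).trace = ‖M‖ ^ 2 := by
  rw [frobenius_norm_def, ← Real.rpow_natCast, ← Real.rpow_mul (by positivity)]
  norm_num [trace, mul_apply, sq]

theorem exists_mem_spectrum_norm_eq_specRad {n : ℕ} (hn : 0 < n)
    (M : Matrix (Fin n) (Fin n) ℂ) : ∃ μ ∈ spectrum ℂ M, ‖μ‖ = specRad M := by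
  have : Nonempty (Fin n) := ⟨⟨0, hn⟩⟩
  have hS : {x : ℝ | ∃ μ ∈ spectrum ℂ M, x = ‖μ‖} = (‖·‖) '' spectrum ℂ M := by
    ext; simp [eq_comm]
  rw [specRad, hS]
  exact ((spectrum.nonempty_of_isAlgClosed_of_finiteDimensional ℂ M).image _).csSup_mem
    ((M.finite_spectrum).image _)

theorem specRad_pow_two_mul_le {n : ℕ} (hn : 0 < n) (A : Matrix (Fin n) (Fin n) ℝ) (k : ℕ) :
    specRad (A.map Complex.ofReal) ^ (2 * k) ≤ (A ^ k * (A ^ k)ᵀ).trace := by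
  obtain ⟨μ, hμ, hμρ⟩ := exists_mem_spectrum_norm_eq_specRad hn (A.map Complex.ofReal)
  have hμk : μ ^ k ∈ spectrum ℂ ((A ^ k).map Complex.ofReal) := by
    rw [show (A ^ k).map Complex.ofReal = (A.map Complex.ofRealHom) ^ k from
      Matrix.map_pow A Complex.ofRealHom k]
    exact spectrum.pow_mem_pow _ k hμ
  rw [← hμρ, trace_mul_transpose_self_eq_frobenius_norm_sq, pow_mul', ← norm_pow,
    ← frobenius_norm_map_eq (A ^ k) Complex.ofReal Complex.norm_real]
  exact pow_le_pow_left₀ (norm_nonneg _) (norm_le_frobenius_norm_of_mem_spectrum hμk) 2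

end Frobenius

theorem exists_pos_mul_pow_le {f : ℕ → ℝ} {r c d : ℝ} (N : ℕ) (hr : 0 ≤ r) (hc : 0 < c)
    (hd : 0 < d) (hfd : ∀ k, 1 ≤ k → d ≤ f k) (hfc : ∀ k, c * r ^ k ≤ f (k + N)) :
    ∃ a > 0, ∀ k, 1 ≤ k → a * r ^ k ≤ f k := by
  set R := max 1 r
  have hRN : 0 < R ^ N := pow_pos (one_pos.trans_le (le_max_left 1 r)) N
  set a := min d c / R ^ N
  have haR : a * R ^ N = min d c := div_mul_cancel₀ _ hRN.ne'
  refine ⟨a, div_pos (lt_min hd hc) hRN, fun k hk => ?_⟩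
  rcases lt_or_ge k N with hkN | hNk
  · calc a * r ^ k ≤ a * R ^ N := by
          gcongr
          calc r ^ k ≤ R ^ k := pow_le_pow_left₀ hr (le_max_right 1 r) k
            _ ≤ R ^ N := pow_le_pow_right₀ (le_max_left 1 r) hkN.le
      _ ≤ d := haR.trans_le (min_le_left d c)
      _ ≤ f k := hfd k hk
  · obtain ⟨m, rfl⟩ := Nat.exists_eq_add_of_le' hNk
    calc a * r ^ (m + N) = a * r ^ N * r ^ m := by ring
      _ ≤ a * R ^ N * r ^ m := by gcongr; exact le_max_right 1 r
      _ ≤ c * r ^ m := by rw [haR]; gcongr; exact min_le_right d c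
      _ ≤ f (m + N) := hfc m

/-- There is a constant `a > 0` such that `Tr(h^k(X)) ≥ a |λ₁(A)|^(2k)` for every `k ≥ 1`
and every positive semidefinite `X`. -/
theorem trace_hIter_ge
    {n : ℕ} (hn : 0 < n)
    (A : Matrix (Fin n) (Fin n) ℝ)
    (Q : Matrix (Fin n) (Fin n) ℝ) (hQ : Q.PosSemidef)
    (hCtrb : (ctrbMat A (psdSqrt hQ)).rank = n) :
    ∃ a : ℝ, 0 < a ∧ ∀ k : ℕ, 1 ≤ k → ∀ X : Matrix (Fin n) (Fin n) ℝ, X.PosSemidef →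
      a * specRad (A.map Complex.ofReal) ^ (2 * k) ≤ ((hOp A Q)^[k] X).trace := by
  have : Nonempty (Fin n) := ⟨⟨0, hn⟩⟩
  set ρ := specRad (A.map Complex.ofReal)
  have hW := posDef_ctrbGramian A hQ hCtrb
  obtain ⟨c, hc, hcW⟩ := hW.exists_pos_mul_trace_le (κ := Fin n)
  have hQtr : 0 < Q.trace := by
    refine hQ.trace_nonneg.lt_of_ne' fun h => ?_
    simpa [hQ.trace_eq_zero_iff.1 h, ctrbGramian] using hW.trace_pos
  have hQle : ∀ k, 1 ≤ k → Q.trace ≤ (ctrbGramian A Q k).trace := fun k hk => by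
    obtain ⟨l, rfl⟩ := Nat.exists_eq_add_of_le hk
    simpa [ctrbGramian] using trace_ctrbGramian_le_add hQ A 1 l
  have hρle : ∀ m, c * (ρ ^ 2) ^ m ≤ (ctrbGramian A Q (m + n)).trace := fun m =>
    calc c * (ρ ^ 2) ^ m ≤ c * (A ^ m * (A ^ m)ᵀ).trace := by
          rw [← pow_mul]; gcongr; exact specRad_pow_two_mul_le hn A m
      _ ≤ (A ^ m * ctrbGramian A Q n * (A ^ m)ᵀ).trace := hcW _
      _ ≤ (ctrbGramian A Q (m + n)).trace := trace_conj_ctrbGramian_le hQ A m n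
  obtain ⟨a, ha, haρ⟩ := exists_pos_mul_pow_le n (sq_nonneg ρ) hc hQtr hQle hρle
  refine ⟨a, ha, fun k hk X hX => ?_⟩
  rw [pow_mul]
  exact (haρ k hk).trans (trace_ctrbGramian_le_trace_hOp_iterate A hX k)
end
end
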